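/- arXiv:2111.09396 — 4 statements merged into one kernel-verified Lean document; each statement's English description precedes it below -/
import Mathlib

section
/- Let Q ∈ ℝ^{n×n} be symmetric positive definite, A ∈ ℝ^{n×n}, B ∈ ℝ^{n×m}, R ∈ ℝ^{m×m} symmetric positive definite, ū ∈ ℝ^m, Ξ ∈ ℝ^{n×n} symmetric positive semidefinite, and ξ̄ ∈ ℝ^n. Suppose there exist scalars α, β, λ ≥ 0 such that the symmetric (n+1+m)×(n+1+m) block matrix −E − αF − βS − λT is positive semidefinite, where E = [[AᵀQ+QA, 0, QB],[0, 0, 0],[BᵀQ, 0, 0]], F = [[Q, 0, 0],[0, −1, 0],[0, 0, 0]], S = [[0, 0, 0],[0, 1−ūᵀRū, ūᵀR],[0, Rū, −R]], and T = [[−Ξ, Ξξ̄, 0],[ξ̄ᵀΞ, 1−ξ̄ᵀΞξ̄, 0],[0, 0, 0]]. Then for every t₀ ∈ ℝ, every differentiable function ζ : ℝ → ℝ^n, and every function u_c : ℝ → ℝ^m such that for all t ≥ t₀ one has ζ′(t) = Aζ(t) + Bu_c(t), (u_c(t)−ū)ᵀR(u_c(t)−ū) ≤ 1, and (ζ(t)−ξ̄)ᵀΞ(ζ(t)−ξ̄)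 ≤ 1, the implication holds: if ζ(t₀)ᵀQζ(t₀) ≤ 1 then ζ(t)ᵀQζ(t) ≤ 1 for all t ≥ t₀. -/
open Matrix

/-- 3×3 block matrix. -/
def blk3 {α β γ : Type*} (M11 : Matrix α α ℝ) (M12 : Matrix α β ℝ) (M13 : Matrix α γ ℝ)
    (M21 : Matrix β α ℝ) (M22 : Matrix β β ℝ) (M23 : Matrix β γ ℝ)
    (M31 : Matrix γ α ℝ) (M32 : Matrix γ β ℝ) (M33 : Matrix γ γ ℝ) :
    Matrix (α ⊕ (β ⊕ γ)) (α ⊕ (β ⊕ γ)) ℝ :=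
  Matrix.fromBlocks M11 (Matrix.of fun i j => Sum.elim (M12 i) (M13 i) j)
    (Matrix.of fun i j => Sum.elim (fun b => M21 b j) (fun c => M31 c j) i)
    (Matrix.fromBlocks M22 M23 M32 M33)

/-- 1×1 matrix with entry `c`. -/
def sc (c : ℝ) : Matrix (Fin 1) (Fin 1) ℝ := Matrix.of fun _ _ => c

/-- column matrix of a vector. -/
def colV {α : Type*} (v : α → ℝ) : Matrix α (Fin 1) ℝ := Matrix.of fun i _ => v i

/-- row matrix of a vector. -/
def rowV {α : Type*} (v : α → ℝ) : Matrix (Fin 1) α ℝ := Matrix.of fun _ j => v j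

/-! Along a trajectory, `V = ζᵀ Q ζ` satisfies `V' ≤ -α (V - 1)`: evaluating the LMI at `(ζ, 1, u)`
gives `V' + α (V - 1) + β (1 - ‖u - ū‖²_R) + λ (1 - ‖ζ - ξ̄‖²_Ξ) ≤ 0`, and the last two terms are
nonnegative by the constraints (S-procedure). Hence `(V - 1) e^{α t}` is antitone and `V - 1` stays
nonpositive once it is. -/

section Calculus

variable {ι : Type*} [Fintype ι] {f g : ℝ → ι → ℝ} {f' g' : ι → ℝ} {t : ℝ}

theorem HasDerivAt.dotProduct (hf : HasDerivAt f f' t) (hg : HasDerivAt g g' t) :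
    HasDerivAt (fun r => f r ⬝ᵥ g r) (f' ⬝ᵥ g t + f t ⬝ᵥ g') t := by
  simp only [_root_.dotProduct, ← Finset.sum_add_distrib]
  exact HasDerivAt.fun_sum fun i _ => (hasDerivAt_pi.mp hf i).mul (hasDerivAt_pi.mp hg i)

theorem HasDerivAt.mulVec {κ : Type*} [Fintype κ] (M : Matrix κ ι ℝ) (hf : HasDerivAt f f' t) :
    HasDerivAt (fun r => M *ᵥ f r) (M *ᵥ f') t :=
  M.mulVecLin.toContinuousLinearMap.hasFDerivAt.comp_hasDerivAt t hf

end Calculus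

theorem nonpos_of_hasDerivAt_le_neg_mul {f f' : ℝ → ℝ} {α t₀ : ℝ}
    (hf : ∀ s ∈ Set.Ici t₀, HasDerivAt f (f' s) s) (hf' : ∀ s ∈ Set.Ici t₀, f' s ≤ -α * f s)
    (h₀ : f t₀ ≤ 0) : ∀ t ∈ Set.Ici t₀, f t ≤ 0 := by
  set g : ℝ → ℝ := fun s => f s * Real.exp (α * s)
  have hg : ∀ s ∈ Set.Ici t₀, HasDerivAt g ((f' s + α * f s) * Real.exp (α * s)) s := fun s hs =>
    ((hf s hs).fun_mul ((hasDerivAt_id' s).const_mul α).exp).congr_deriv (by ring)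
  have hanti : AntitoneOn g (Set.Ici t₀) := by
    refine antitoneOn_of_hasDerivWithinAt_nonpos
      (f' := fun s => (f' s + α * f s) * Real.exp (α * s)) (convex_Ici t₀) ?_ ?_ ?_
    · exact fun s hs => (hg s hs).continuousAt.continuousWithinAt
    · exact fun s hs => (hg s (interior_subset hs)).hasDerivWithinAt
    · intro s hs
      have hs := interior_subset hs
      exact mul_nonpos_of_nonpos_of_nonneg (by linarith [hf' s hs]) (Real.exp_pos _).le
  intro t ht
  have hgt : g t ≤ 0 := (hanti Set.self_mem_Ici ht ht).trans
    (mul_nonpos_of_nonpos_of_nonneg h₀ (Real.exp_pos _).le)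
  exact nonpos_of_mul_nonpos_left hgt (Real.exp_pos _)

theorem Matrix.PosSemidef.sProcedure {ι : Type*} [Fintype ι] {E F S T : Matrix ι ι ℝ}
    {α β lam : ℝ} (h : (-E - α • F - β • S - lam • T).PosSemidef) (hβ : 0 ≤ β) (hlam : 0 ≤ lam)
    {z : ι → ℝ} (hS : 0 ≤ z ⬝ᵥ (S *ᵥ z)) (hT : 0 ≤ z ⬝ᵥ (T *ᵥ z)) :
    z ⬝ᵥ (E *ᵥ z) + α * (z ⬝ᵥ (F *ᵥ z)) ≤ 0 := by
  have hz := h.dotProduct_mulVec_nonneg z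
  simp only [star_trivial, sub_mulVec, neg_mulVec, smul_mulVec, dotProduct_sub, dotProduct_neg,
    dotProduct_smul, smul_eq_mul] at hz
  linarith [mul_nonneg hβ hS, mul_nonneg hlam hT]

section BlockQuadraticForm

variable {ι κ : Type*} [Fintype ι] [Fintype κ]

theorem dotProduct_blk3_mulVec {β : Type*} [Fintype β]
    (M11 : Matrix ι ι ℝ) (M12 : Matrix ι β ℝ) (M13 : Matrix ι κ ℝ)
    (M21 : Matrix β ι ℝ) (M22 : Matrix β β ℝ) (M23 : Matrix β κ ℝ)
    (M31 : Matrix κ ι ℝ) (M32 : Matrix κ β ℝ) (M33 : Matrix κ κ ℝ)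
    (x : ι → ℝ) (y : β → ℝ) (w : κ → ℝ) :
    Sum.elim x (Sum.elim y w) ⬝ᵥ
        (blk3 M11 M12 M13 M21 M22 M23 M31 M32 M33 *ᵥ Sum.elim x (Sum.elim y w))
      = x ⬝ᵥ (M11 *ᵥ x) + x ⬝ᵥ (M12 *ᵥ y) + x ⬝ᵥ (M13 *ᵥ w)
        + y ⬝ᵥ (M21 *ᵥ x) + y ⬝ᵥ (M22 *ᵥ y) + y ⬝ᵥ (M23 *ᵥ w)
        + w ⬝ᵥ (M31 *ᵥ x) + w ⬝ᵥ (M32 *ᵥ y) + w ⬝ᵥ (M33 *ᵥ w) := by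
  simp only [blk3, dotProduct, mulVec, fromBlocks, Fintype.sum_sum_type, of_apply,
    Sum.elim_inl, Sum.elim_inr, Finset.mul_sum, mul_add, Finset.sum_add_distrib]
  ring

@[simp] theorem one_dotProduct_sc_mulVec (c : ℝ) : (fun _ => 1) ⬝ᵥ (sc c *ᵥ fun _ => 1) = c := by
  simp [sc, dotProduct, mulVec]

@[simp] theorem one_dotProduct_rowV_mulVec (v w : ι → ℝ) :
    (fun _ => 1) ⬝ᵥ (rowV v *ᵥ w) = v ⬝ᵥ w := by
  simp [rowV, dotProduct, mulVec]

@[simp] theorem dotProduct_colV_mulVec_one (v w : ι → ℝ) :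
    w ⬝ᵥ (colV v *ᵥ fun _ => 1) = w ⬝ᵥ v := by
  simp [colV, dotProduct, mulVec]

def augmentVec (x : ι → ℝ) (w : κ → ℝ) : ι ⊕ (Fin 1 ⊕ κ) → ℝ :=
  Sum.elim x (Sum.elim (fun _ => 1) w)

variable (x : ι → ℝ) (w : κ → ℝ)

theorem augmentVec_quadForm_lyapunovDeriv (Q A : Matrix ι ι ℝ) (B : Matrix ι κ ℝ) :
    augmentVec x w ⬝ᵥ (blk3 (Aᵀ * Q + Q * A) 0 (Q * B) 0 0 0 (Bᵀ * Q) 0 0 *ᵥ augmentVec x w)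
      = (A *ᵥ x + B *ᵥ w) ⬝ᵥ (Q *ᵥ x) + x ⬝ᵥ (Q *ᵥ (A *ᵥ x + B *ᵥ w)) := by
  rw [augmentVec, dotProduct_blk3_mulVec]
  simp only [zero_mulVec, dotProduct_zero, add_zero, add_dotProduct, add_mulVec, ← mulVec_mulVec,
    mulVec_add, dotProduct_add, dotProduct_mulVec _ Aᵀ, dotProduct_mulVec _ Bᵀ, vecMul_transpose]
  ring

theorem augmentVec_quadForm_level (Q : Matrix ι ι ℝ) :
    augmentVec x w ⬝ᵥ (blk3 Q 0 0 0 (sc (-1)) 0 0 0 0 *ᵥ augmentVec x w) = x ⬝ᵥ (Q *ᵥ x) - 1 := by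
  rw [augmentVec, dotProduct_blk3_mulVec]
  simp only [zero_mulVec, dotProduct_zero, add_zero, one_dotProduct_sc_mulVec]
  ring

theorem augmentVec_quadForm_inputEllipsoid (R : Matrix κ κ ℝ) (ubar : κ → ℝ) :
    augmentVec x w ⬝ᵥ (blk3 0 0 0 0 (sc (1 - ubar ⬝ᵥ (R *ᵥ ubar))) (rowV (ubar ᵥ* R))
      0 (colV (R *ᵥ ubar)) (-R) *ᵥ augmentVec x w) = 1 - (w - ubar) ⬝ᵥ (R *ᵥ (w - ubar)) := by
  rw [augmentVec, dotProduct_blk3_mulVec]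
  simp only [zero_mulVec, dotProduct_zero, add_zero, zero_add, one_dotProduct_sc_mulVec,
    one_dotProduct_rowV_mulVec, dotProduct_colV_mulVec_one, sub_dotProduct, mulVec_sub,
    dotProduct_sub, neg_mulVec, dotProduct_neg, ← dotProduct_mulVec]
  ring

theorem augmentVec_quadForm_stateEllipsoid (Ξ : Matrix ι ι ℝ) (ξbar : ι → ℝ) :
    augmentVec x w ⬝ᵥ (blk3 (-Ξ) (colV (Ξ *ᵥ ξbar)) 0 (rowV (ξbar ᵥ* Ξ))
      (sc (1 - ξbar ⬝ᵥ (Ξ *ᵥ ξbar))) 0 0 0 0 *ᵥ augmentVec x w)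
      = 1 - (x - ξbar) ⬝ᵥ (Ξ *ᵥ (x - ξbar)) := by
  rw [augmentVec, dotProduct_blk3_mulVec]
  simp only [zero_mulVec, dotProduct_zero, add_zero, one_dotProduct_sc_mulVec,
    one_dotProduct_rowV_mulVec, dotProduct_colV_mulVec_one, sub_dotProduct, mulVec_sub,
    dotProduct_sub, neg_mulVec, dotProduct_neg, ← dotProduct_mulVec]
  ring

end BlockQuadraticForm

theorem invariant_ellipsoidal_set_general {n m : ℕ}
    (Q A : Matrix (Fin n) (Fin n) ℝ) (B : Matrix (Fin n) (Fin m) ℝ)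
    (R : Matrix (Fin m) (Fin m) ℝ) (ubar : Fin m → ℝ)
    (Ξ : Matrix (Fin n) (Fin n) ℝ) (ξbar : Fin n → ℝ)
    (E F S T : Matrix ((Fin n) ⊕ ((Fin 1) ⊕ (Fin m))) ((Fin n) ⊕ ((Fin 1) ⊕ (Fin m))) ℝ)
    (hE : E = blk3 (Aᵀ * Q + Q * A) 0 (Q * B)
                   0 0 0
                   (Bᵀ * Q) 0 0)
    (hF : F = blk3 Q 0 0
                   0 (sc (-1)) 0
                   0 0 0)
    (hS : S = blk3 0 0 0
                   0 (sc (1 - ubar ⬝ᵥ (R *ᵥ ubar))) (rowV (ubar ᵥ* R))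
                   0 (colV (R *ᵥ ubar)) (-R))
    (hT : T = blk3 (-Ξ) (colV (Ξ *ᵥ ξbar)) 0
                   (rowV (ξbar ᵥ* Ξ)) (sc (1 - ξbar ⬝ᵥ (Ξ *ᵥ ξbar))) 0
                   0 0 0)
    (α β lam : ℝ) (hβ : 0 ≤ β) (hlam : 0 ≤ lam)
    (hLMI : (-E - α • F - β • S - lam • T).PosSemidef) :
    ∀ (t₀ : ℝ) (ζ : ℝ → Fin n → ℝ) (u : ℝ → Fin m → ℝ),
      Differentiable ℝ ζ →
      (∀ t, t₀ ≤ t → deriv ζ t = A *ᵥ ζ t + B *ᵥ u t) →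
      (∀ t, t₀ ≤ t → (u t - ubar) ⬝ᵥ (R *ᵥ (u t - ubar)) ≤ 1) →
      (∀ t, t₀ ≤ t → (ζ t - ξbar) ⬝ᵥ (Ξ *ᵥ (ζ t - ξbar)) ≤ 1) →
      (ζ t₀) ⬝ᵥ (Q *ᵥ ζ t₀) ≤ 1 →
      ∀ t, t₀ ≤ t → (ζ t) ⬝ᵥ (Q *ᵥ ζ t) ≤ 1 := by
  intro t₀ ζ u hζ hdyn hu hξ h₀ t ht
  subst hE hF hS hT
  have hV : ∀ s, HasDerivAt (fun r => ζ r ⬝ᵥ (Q *ᵥ ζ r) - 1)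
      (deriv ζ s ⬝ᵥ (Q *ᵥ ζ s) + ζ s ⬝ᵥ (Q *ᵥ deriv ζ s)) s := fun s =>
    ((hζ s).hasDerivAt.dotProduct ((hζ s).hasDerivAt.mulVec Q)).sub_const 1
  have hdecay : ∀ s ∈ Set.Ici t₀, deriv ζ s ⬝ᵥ (Q *ᵥ ζ s) + ζ s ⬝ᵥ (Q *ᵥ deriv ζ s)
      ≤ -α * (ζ s ⬝ᵥ (Q *ᵥ ζ s) - 1) := by
    intro s hs
    have hS := sub_nonneg.2 (hu s hs)
    have hT := sub_nonneg.2 (hξ s hs)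
    rw [← augmentVec_quadForm_inputEllipsoid (ζ s)] at hS
    rw [← augmentVec_quadForm_stateEllipsoid _ (u s)] at hT
    have h := hLMI.sProcedure hβ hlam hS hT
    rw [augmentVec_quadForm_lyapunovDeriv, augmentVec_quadForm_level, ← hdyn s hs] at h
    linarith
  have := nonpos_of_hasDerivAt_le_neg_mul (fun s _ => hV s) hdecay (by linarith) t ht
  linarith

/-- **Lemma 1 (Invariant Ellipsoidal Set).** -/
theorem invariant_ellipsoidal_set {n m : ℕ}
    (Q A : Matrix (Fin n) (Fin n) ℝ) (B : Matrix (Fin n) (Fin m) ℝ)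
    (R : Matrix (Fin m) (Fin m) ℝ) (ubar : Fin m → ℝ)
    (Ξ : Matrix (Fin n) (Fin n) ℝ) (ξbar : Fin n → ℝ)
    (hQ : Q.PosDef) (hR : R.PosDef) (hΞ : Ξ.PosSemidef)
    (E F S T : Matrix ((Fin n) ⊕ ((Fin 1) ⊕ (Fin m))) ((Fin n) ⊕ ((Fin 1) ⊕ (Fin m))) ℝ)
    (hE : E = blk3 (Aᵀ * Q + Q * A) 0 (Q * B)
                   0 0 0
                   (Bᵀ * Q) 0 0)
    (hF : F = blk3 Q 0 0
                   0 (sc (-1)) 0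
                   0 0 0)
    (hS : S = blk3 0 0 0
                   0 (sc (1 - ubar ⬝ᵥ (R *ᵥ ubar))) (rowV (ubar ᵥ* R))
                   0 (colV (R *ᵥ ubar)) (-R))
    (hT : T = blk3 (-Ξ) (colV (Ξ *ᵥ ξbar)) 0
                   (rowV (ξbar ᵥ* Ξ)) (sc (1 - ξbar ⬝ᵥ (Ξ *ᵥ ξbar))) 0
                   0 0 0)
    (α β lam : ℝ) (hα : 0 ≤ α) (hβ : 0 ≤ β) (hlam : 0 ≤ lam)
    (hLMI : (-E - α • F - β • S - lam • T).PosSemidef) :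
    ∀ (t₀ : ℝ) (ζ : ℝ → Fin n → ℝ) (u : ℝ → Fin m → ℝ),
      Differentiable ℝ ζ →
      (∀ t, t₀ ≤ t → deriv ζ t = A *ᵥ ζ t + B *ᵥ u t) →
      (∀ t, t₀ ≤ t → (u t - ubar) ⬝ᵥ (R *ᵥ (u t - ubar)) ≤ 1) →
      (∀ t, t₀ ≤ t → (ζ t - ξbar) ⬝ᵥ (Ξ *ᵥ (ζ t - ξbar)) ≤ 1) →
      (ζ t₀) ⬝ᵥ (Q *ᵥ ζ t₀) ≤ 1 →
      ∀ t, t₀ ≤ t → (ζ t) ⬝ᵥ (Q *ᵥ ζ t) ≤ 1 :=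
  invariant_ellipsoidal_set_general Q A B R ubar Ξ ξbar E F S T hE hF hS hT α β lam hβ hlam hLMI
end

section
/- Let X, Ψ ∈ ℝ^{p×p} be symmetric positive definite, ψ̄ ∈ ℝ^p, and δ ≥ 0. Define the symmetric (2p+1)×(2p+1) block matrices J = [[0, −XΨψ̄, −X],[−ψ̄ᵀΨX, −1+ψ̄ᵀΨψ̄, 0],[−X, 0, −Ψ⁻¹]] and W = [[−X, 0, 0],[0, 1, 0],[0, 0, 0]]. If −J − δW ⪰ 0, then {x ∈ ℝ^p : xᵀX⁻¹x ≤ 1} ⊆ {x ∈ ℝ^p : (x−ψ̄)ᵀΨ(x−ψ̄) ≤ 1}. -/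
open Matrix

/- At the lifted point z = (X⁻¹x, 1, −Ψx) the quadratic forms of the LMI matrices are
zᵀJz = (x − ψ̄)ᵀΨ(x − ψ̄) − 1 and zᵀWz = 1 − xᵀX⁻¹x, so 0 ≤ zᵀ(−J − δW)z reads
(x − ψ̄)ᵀΨ(x − ψ̄) ≤ 1 − δ(1 − xᵀX⁻¹x), which is at most 1 on the ellipsoid E(X⁻¹). -/

section BlockMatrix

variable {α β γ : Type*}

lemma blk3_eq_fromBlocks (M11 : Matrix α α ℝ) (M12 : Matrix α β ℝ) (M13 : Matrix α γ ℝ)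
    (M21 : Matrix β α ℝ) (M22 : Matrix β β ℝ) (M23 : Matrix β γ ℝ)
    (M31 : Matrix γ α ℝ) (M32 : Matrix γ β ℝ) (M33 : Matrix γ γ ℝ) :
    blk3 M11 M12 M13 M21 M22 M23 M31 M32 M33 =
      fromBlocks M11 (fromCols M12 M13) (fromRows M21 M31) (fromBlocks M22 M23 M32 M33) := by
  ext (i | j | k) (i' | j' | k') <;> rfl

lemma sumElim_dotProduct_blk3_mulVec [Fintype α] [Fintype β] [Fintype γ]
    (M11 : Matrix α α ℝ) (M12 : Matrix α β ℝ) (M13 : Matrix α γ ℝ)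
    (M21 : Matrix β α ℝ) (M22 : Matrix β β ℝ) (M23 : Matrix β γ ℝ)
    (M31 : Matrix γ α ℝ) (M32 : Matrix γ β ℝ) (M33 : Matrix γ γ ℝ)
    (u : α → ℝ) (t : β → ℝ) (w : γ → ℝ) :
    (u ⊕ᵥ (t ⊕ᵥ w)) ⬝ᵥ (blk3 M11 M12 M13 M21 M22 M23 M31 M32 M33 *ᵥ (u ⊕ᵥ (t ⊕ᵥ w))) =
      u ⬝ᵥ (M11 *ᵥ u) + u ⬝ᵥ (M12 *ᵥ t) + u ⬝ᵥ (M13 *ᵥ w)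
      + t ⬝ᵥ (M21 *ᵥ u) + t ⬝ᵥ (M22 *ᵥ t) + t ⬝ᵥ (M23 *ᵥ w)
      + w ⬝ᵥ (M31 *ᵥ u) + w ⬝ᵥ (M32 *ᵥ t) + w ⬝ᵥ (M33 *ᵥ w) := by
  simp only [blk3_eq_fromBlocks, fromBlocks_mulVec, Sum.elim_comp_inl, Sum.elim_comp_inr,
    fromCols_mulVec_sumElim, fromRows_mulVec, sumElim_dotProduct_sumElim, dotProduct_add]
  ring

lemma colV_mulVec_one (v : α → ℝ) : colV v *ᵥ 1 = v := by
  ext i; simp [colV, mulVec, dotProduct]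

lemma one_dotProduct_rowV_mulVec_s5 [Fintype α] (v u : α → ℝ) : 1 ⬝ᵥ (rowV v *ᵥ u) = v ⬝ᵥ u := by
  simp [rowV, mulVec, dotProduct]

end BlockMatrix

lemma one_dotProduct_sc_mulVec_one (c : ℝ) : (1 : Fin 1 → ℝ) ⬝ᵥ (sc c *ᵥ 1) = c := by
  simp [sc, mulVec, dotProduct]

section Inverse

variable {n R : Type*} [Fintype n] [DecidableEq n] [CommRing R] {A : Matrix n n R}

lemma mulVec_nonsing_inv_mulVec (hA : IsUnit A.det) (x : n → R) : A *ᵥ (A⁻¹ *ᵥ x) = x := by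
  rw [mulVec_mulVec, mul_nonsing_inv A hA, one_mulVec]

lemma nonsing_inv_mulVec_mulVec (hA : IsUnit A.det) (x : n → R) : A⁻¹ *ᵥ (A *ᵥ x) = x := by
  rw [mulVec_mulVec, nonsing_inv_mul A hA, one_mulVec]

end Inverse

section SafeSet

variable {n : Type*} [Fintype n] [DecidableEq n] {X Ψ : Matrix n n ℝ}

noncomputable def lmiMatrixJ (X Ψ : Matrix n n ℝ) (ψbar : n → ℝ) :
    Matrix (n ⊕ (Fin 1 ⊕ n)) (n ⊕ (Fin 1 ⊕ n)) ℝ :=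
  blk3 0 (colV (-(X *ᵥ (Ψ *ᵥ ψbar)))) (-X)
    (rowV (-((ψbar ᵥ* Ψ) ᵥ* X))) (sc (-1 + ψbar ⬝ᵥ (Ψ *ᵥ ψbar))) 0
    (-X) 0 (-Ψ⁻¹)

def lmiMatrixW (X : Matrix n n ℝ) : Matrix (n ⊕ (Fin 1 ⊕ n)) (n ⊕ (Fin 1 ⊕ n)) ℝ :=
  blk3 (-X) 0 0 0 (sc 1) 0 0 0 0

noncomputable def liftPoint (X Ψ : Matrix n n ℝ) (x : n → ℝ) : n ⊕ (Fin 1 ⊕ n) → ℝ :=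
  (X⁻¹ *ᵥ x) ⊕ᵥ (1 ⊕ᵥ -(Ψ *ᵥ x))

lemma liftPoint_dotProduct_lmiMatrixW_mulVec (hX : IsUnit X.det) (Ψ : Matrix n n ℝ) (x : n → ℝ) :
    liftPoint X Ψ x ⬝ᵥ (lmiMatrixW X *ᵥ liftPoint X Ψ x) = 1 - x ⬝ᵥ (X⁻¹ *ᵥ x) := by
  simp only [liftPoint, lmiMatrixW, sumElim_dotProduct_blk3_mulVec, neg_mulVec,
    mulVec_nonsing_inv_mulVec hX, one_dotProduct_sc_mulVec_one, zero_mulVec, dotProduct_zero,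
    dotProduct_neg, dotProduct_comm (X⁻¹ *ᵥ x) x]
  ring

lemma liftPoint_dotProduct_lmiMatrixJ_mulVec (hXs : X.IsSymm) (hX : IsUnit X.det)
    (hΨ : IsUnit Ψ.det) (ψbar x : n → ℝ) :
    liftPoint X Ψ x ⬝ᵥ (lmiMatrixJ X Ψ ψbar *ᵥ liftPoint X Ψ x) =
      (x - ψbar) ⬝ᵥ (Ψ *ᵥ (x - ψbar)) - 1 := by
  have hXu := mulVec_nonsing_inv_mulVec hX x
  have hleft (v : n → ℝ) : (X⁻¹ *ᵥ x) ⬝ᵥ (X *ᵥ v) = x ⬝ᵥ v := by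
    rw [dotProduct_mulVec, ← mulVec_transpose, hXs.eq, hXu]
  have hright (v : n → ℝ) : (v ᵥ* X) ⬝ᵥ (X⁻¹ *ᵥ x) = v ⬝ᵥ x := by
    rw [← dotProduct_mulVec, hXu]
  simp only [liftPoint, lmiMatrixJ, sumElim_dotProduct_blk3_mulVec, colV_mulVec_one,
    one_dotProduct_rowV_mulVec_s5, one_dotProduct_sc_mulVec_one, zero_mulVec, dotProduct_zero,
    neg_mulVec, mulVec_neg, dotProduct_neg, neg_dotProduct, hleft, hright, hXu,
    nonsing_inv_mulVec_mulVec hΨ, ← dotProduct_mulVec, mulVec_sub, dotProduct_sub, sub_dotProduct]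
  ring

end SafeSet

/-- Safe-set inclusion from LMI (24): conclusion (ii) of Theorem 1. -/
theorem safe_set_inclusion {p : ℕ}
    (X Ψ : Matrix (Fin p) (Fin p) ℝ) (ψbar : Fin p → ℝ)
    (hX : X.PosDef) (hΨ : Ψ.PosDef)
    (δ : ℝ) (hδ : 0 ≤ δ)
    (J W : Matrix ((Fin p) ⊕ ((Fin 1) ⊕ (Fin p))) ((Fin p) ⊕ ((Fin 1) ⊕ (Fin p))) ℝ)
    (hJ : J = blk3 0 (colV (-(X *ᵥ (Ψ *ᵥ ψbar)))) (-X)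
                   (rowV (-((ψbar ᵥ* Ψ) ᵥ* X))) (sc (-1 + ψbar ⬝ᵥ (Ψ *ᵥ ψbar))) 0
                   (-X) 0 (-Ψ⁻¹))
    (hW : W = blk3 (-X) 0 0
                   0 (sc 1) 0
                   0 0 0)
    (hLMI : (-J - δ • W).PosSemidef) :
    {x : Fin p → ℝ | x ⬝ᵥ (X⁻¹ *ᵥ x) ≤ 1} ⊆
      {x : Fin p → ℝ | (x - ψbar) ⬝ᵥ (Ψ *ᵥ (x - ψbar)) ≤ 1} := by
  intro x (hx : x ⬝ᵥ (X⁻¹ *ᵥ x) ≤ 1)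
  obtain rfl : J = lmiMatrixJ X Ψ ψbar := hJ
  obtain rfl : W = lmiMatrixW X := hW
  have hXdet : IsUnit X.det := (isUnit_iff_isUnit_det X).1 hX.isUnit
  have hΨdet : IsUnit Ψ.det := (isUnit_iff_isUnit_det Ψ).1 hΨ.isUnit
  have hXs : X.IsSymm := isHermitian_iff_isSymm.1 hX.isHermitian
  have hnonneg := hLMI.dotProduct_mulVec_nonneg (liftPoint X Ψ x)
  rw [star_trivial, sub_mulVec, dotProduct_sub, neg_mulVec, dotProduct_neg, smul_mulVec,
    dotProduct_smul, smul_eq_mul, liftPoint_dotProduct_lmiMatrixJ_mulVec hXs hXdet hΨdet,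
    liftPoint_dotProduct_lmiMatrixW_mulVec hXdet] at hnonneg
  show (x - ψbar) ⬝ᵥ (Ψ *ᵥ (x - ψbar)) ≤ 1
  linarith [mul_nonneg hδ (sub_nonneg.2 hx)]
end

section
/- Let p, m ≥ 1. Let Q = [[Y, N],[Nᵀ, Ỹ]] ∈ ℝ^{2p×2p} be invertible with inverse Q⁻¹ = [[X, M],[Mᵀ, X̃]] (all blocks p×p, Y, Ỹ, X, X̃ symmetric), and define Π₁ = [[X, I_p],[Mᵀ, 0]] and Π₂ = [[I_p, Y],[0, Nᵀ]]. Let A_p ∈ ℝ^{p×p}, B_p ∈ ℝ^{p×m}, diagonal Γ_c, Γ_f ∈ ℝ^{m×m} with Γ_c + Γ_f = I_m, A_f ∈ ℝ^{p×p}, B_f ∈ ℝ^{p×m}, C_f ∈ ℝ^{m×p}, D_f ∈ ℝ^{m×m}, and set A = [[A_p, B_pΓ_fC_f],[0, A_f]], B = [[B_pΓ_fD_f + B_pΓ_c],[B_f]], C_z = [0, C_f]. Define Â_f = YA_pX + YB_pΓ_fC_fMᵀ + NA_fMᵀ, B̂_f = YB_pΓ_fD_f + NB_f, Ĉ_f =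 C_fMᵀ, D̂_f = D_f. Then the following identities hold: QΠ₁ = Π₂; Π₁ᵀQΠ₁ = [[X, I_p],[I_p, Y]]; Π₁ᵀQAΠ₁ = [[A_pX + B_pΓ_fĈ_f, A_p],[Â_f, YA_p]]; Π₁ᵀQB = [[B_pΓ_fD̂_f + B_pΓ_c],[B̂_f + YB_pΓ_c]]; and C_zΠ₁ = [Ĉ_f, 0]. -/
/-!
Π₁ is the first block column of Q⁻¹ = [[X, M], [Mᵀ, X̃]] padded by [[I], [0]], so QΠ₁ is the first
block column of the identity padded by the first block column of Q, i.e. Π₂; dually, since X is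
symmetric, Π₁ᵀ is the first block row of Q⁻¹ stacked on [I, 0], so Π₁ᵀQ = [[I, 0], [Y, N]].
The remaining identities follow by multiplying this out, using YX + NMᵀ = I once more.
-/

open Matrix

def vcat {α β κ : Type*} (M₁ : Matrix α κ ℝ) (M₂ : Matrix β κ ℝ) : Matrix (α ⊕ β) κ ℝ :=
  Matrix.of fun i j => Sum.elim (fun a => M₁ a j) (fun b => M₂ b j) i

def hcat {α β κ : Type*} (M₁ : Matrix κ α ℝ) (M₂ : Matrix κ β ℝ) : Matrix κ (α ⊕ β) ℝ :=
  Matrix.of fun i j => Sum.elim (M₁ i) (M₂ i) j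

lemma vcat_eq_fromRows {α β κ : Type*} (M₁ : Matrix α κ ℝ) (M₂ : Matrix β κ ℝ) :
    vcat M₁ M₂ = fromRows M₁ M₂ := by
  ext (i | i) j <;> rfl

lemma hcat_eq_fromCols {α β κ : Type*} (M₁ : Matrix κ α ℝ) (M₂ : Matrix κ β ℝ) :
    hcat M₁ M₂ = fromCols M₁ M₂ := by
  ext i (j | j) <;> rfl

namespace Matrix

variable {R n o : Type*} [Semiring R] [Fintype n] [Fintype o] [DecidableEq n] [DecidableEq o]

theorem fromBlocks_mul_fromBlocks_eq_one_iff {A A' : Matrix n n R} {B B' : Matrix n o R}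
    {C C' : Matrix o n R} {D D' : Matrix o o R} :
    fromBlocks A B C D * fromBlocks A' B' C' D' = 1 ↔
      A * A' + B * C' = 1 ∧ A * B' + B * D' = 0 ∧ C * A' + D * C' = 0 ∧ C * B' + D * D' = 1 := by
  rw [fromBlocks_multiply, ← fromBlocks_one, fromBlocks_inj]

variable {Y X : Matrix n n R} {N M : Matrix n o R} {Yt Xt : Matrix o o R}

theorem fromBlocks_mul_fromBlocks_one_zero_of_mul_eq_one
    (h : fromBlocks Y N Nᵀ Yt * fromBlocks X M Mᵀ Xt = 1) :
    fromBlocks Y N Nᵀ Yt * fromBlocks X 1 Mᵀ 0 = fromBlocks 1 Y 0 Nᵀ := by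
  obtain ⟨h₁₁, -, h₂₁, -⟩ := fromBlocks_mul_fromBlocks_eq_one_iff.mp h
  simp [fromBlocks_multiply, h₁₁, h₂₁]

theorem transpose_fromBlocks_one_zero_mul_of_mul_eq_one (hX : X.IsSymm)
    (h : fromBlocks X M Mᵀ Xt * fromBlocks Y N Nᵀ Yt = 1) :
    (fromBlocks X 1 Mᵀ 0)ᵀ * fromBlocks Y N Nᵀ Yt = fromBlocks 1 0 Y N := by
  obtain ⟨h₁₁, h₁₂, -, -⟩ := fromBlocks_mul_fromBlocks_eq_one_iff.mp h
  simp [fromBlocks_transpose, hX.eq, fromBlocks_multiply, h₁₁, h₁₂]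

end Matrix

theorem change_of_variables_identities_general {p m : ℕ}
    (Y N Ytilde X M Xtilde : Matrix (Fin p) (Fin p) ℝ)
    (hX : X.IsSymm)
    (hinv : (Matrix.fromBlocks Y N Nᵀ Ytilde) * (Matrix.fromBlocks X M Mᵀ Xtilde) = 1)
    (hinv' : (Matrix.fromBlocks X M Mᵀ Xtilde) * (Matrix.fromBlocks Y N Nᵀ Ytilde) = 1)
    (Ap : Matrix (Fin p) (Fin p) ℝ) (Bp : Matrix (Fin p) (Fin m) ℝ)
    (Γc Γf : Matrix (Fin m) (Fin m) ℝ)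
    (Af : Matrix (Fin p) (Fin p) ℝ) (Bf : Matrix (Fin p) (Fin m) ℝ)
    (Cf : Matrix (Fin m) (Fin p) ℝ) (Df : Matrix (Fin m) (Fin m) ℝ)
    (Q A : Matrix ((Fin p) ⊕ (Fin p)) ((Fin p) ⊕ (Fin p)) ℝ)
    (B : Matrix ((Fin p) ⊕ (Fin p)) (Fin m) ℝ) (Cz : Matrix (Fin m) ((Fin p) ⊕ (Fin p)) ℝ)
    (hQ : Q = Matrix.fromBlocks Y N Nᵀ Ytilde)
    (hA : A = Matrix.fromBlocks Ap (Bp * Γf * Cf) 0 Af)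
    (hB : B = vcat (Bp * Γf * Df + Bp * Γc) Bf)
    (hCz : Cz = hcat 0 Cf)
    (Pi1 Pi2 : Matrix ((Fin p) ⊕ (Fin p)) ((Fin p) ⊕ (Fin p)) ℝ)
    (hPi1 : Pi1 = Matrix.fromBlocks X 1 Mᵀ 0)
    (hPi2 : Pi2 = Matrix.fromBlocks 1 Y 0 Nᵀ)
    (Afh : Matrix (Fin p) (Fin p) ℝ) (Bfh : Matrix (Fin p) (Fin m) ℝ)
    (Cfh : Matrix (Fin m) (Fin p) ℝ) (Dfh : Matrix (Fin m) (Fin m) ℝ)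
    (hAfh : Afh = Y * Ap * X + Y * Bp * Γf * Cf * Mᵀ + N * Af * Mᵀ)
    (hBfh : Bfh = Y * Bp * Γf * Df + N * Bf)
    (hCfh : Cfh = Cf * Mᵀ) (hDfh : Dfh = Df) :
    Q * Pi1 = Pi2 ∧
    Pi1ᵀ * Q * Pi1 = Matrix.fromBlocks X 1 1 Y ∧
    Pi1ᵀ * (Q * A) * Pi1 = Matrix.fromBlocks (Ap * X + Bp * Γf * Cfh) Ap Afh (Y * Ap) ∧
    Pi1ᵀ * (Q * B) = vcat (Bp * Γf * Dfh + Bp * Γc) (Bfh + Y * Bp * Γc) ∧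
    Cz * Pi1 = hcat Cfh 0 := by
  subst hQ hA hB hCz hPi1 hPi2 hAfh hBfh hCfh hDfh
  have hQPi₁ := fromBlocks_mul_fromBlocks_one_zero_of_mul_eq_one hinv
  have hPi₁Q := transpose_fromBlocks_one_zero_mul_of_mul_eq_one hX hinv'
  obtain ⟨hYX, -, -, -⟩ := fromBlocks_mul_fromBlocks_eq_one_iff.mp hinv
  refine ⟨hQPi₁, ?_, ?_, ?_, ?_⟩
  · rw [hPi₁Q, fromBlocks_multiply]
    simp [hYX]
  · rw [← Matrix.mul_assoc, hPi₁Q]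
    simp [fromBlocks_multiply, Matrix.add_mul, Matrix.mul_assoc, add_assoc]
  · rw [← Matrix.mul_assoc, hPi₁Q, vcat_eq_fromRows, vcat_eq_fromRows, fromBlocks_mul_fromRows]
    simp [Matrix.mul_add, Matrix.mul_assoc, add_right_comm]
  · rw [hcat_eq_fromCols, hcat_eq_fromCols, fromCols_mul_fromBlocks]
    simp

/-- Linearizing change-of-variables identities (Scherer et al.) used in Theorem 1. -/
theorem change_of_variables_identities {p m : ℕ} (hp : 1 ≤ p) (hm : 1 ≤ m)
    (Y N Ytilde X M Xtilde : Matrix (Fin p) (Fin p) ℝ)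
    (hY : Y.IsSymm) (hYt : Ytilde.IsSymm) (hX : X.IsSymm) (hXt : Xtilde.IsSymm)
    (hinv : (Matrix.fromBlocks Y N Nᵀ Ytilde) * (Matrix.fromBlocks X M Mᵀ Xtilde) = 1)
    (hinv' : (Matrix.fromBlocks X M Mᵀ Xtilde) * (Matrix.fromBlocks Y N Nᵀ Ytilde) = 1)
    (Ap : Matrix (Fin p) (Fin p) ℝ) (Bp : Matrix (Fin p) (Fin m) ℝ)
    (Γc Γf : Matrix (Fin m) (Fin m) ℝ) (hΓc : Γc.IsDiag) (hΓf : Γf.IsDiag)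
    (hΓ : Γc + Γf = 1)
    (Af : Matrix (Fin p) (Fin p) ℝ) (Bf : Matrix (Fin p) (Fin m) ℝ)
    (Cf : Matrix (Fin m) (Fin p) ℝ) (Df : Matrix (Fin m) (Fin m) ℝ)
    (Q A : Matrix ((Fin p) ⊕ (Fin p)) ((Fin p) ⊕ (Fin p)) ℝ)
    (B : Matrix ((Fin p) ⊕ (Fin p)) (Fin m) ℝ) (Cz : Matrix (Fin m) ((Fin p) ⊕ (Fin p)) ℝ)
    (hQ : Q = Matrix.fromBlocks Y N Nᵀ Ytilde)
    (hA : A = Matrix.fromBlocks Ap (Bp * Γf * Cf) 0 Af)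
    (hB : B = vcat (Bp * Γf * Df + Bp * Γc) Bf)
    (hCz : Cz = hcat 0 Cf)
    (Pi1 Pi2 : Matrix ((Fin p) ⊕ (Fin p)) ((Fin p) ⊕ (Fin p)) ℝ)
    (hPi1 : Pi1 = Matrix.fromBlocks X 1 Mᵀ 0)
    (hPi2 : Pi2 = Matrix.fromBlocks 1 Y 0 Nᵀ)
    (Afh : Matrix (Fin p) (Fin p) ℝ) (Bfh : Matrix (Fin p) (Fin m) ℝ)
    (Cfh : Matrix (Fin m) (Fin p) ℝ) (Dfh : Matrix (Fin m) (Fin m) ℝ)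
    (hAfh : Afh = Y * Ap * X + Y * Bp * Γf * Cf * Mᵀ + N * Af * Mᵀ)
    (hBfh : Bfh = Y * Bp * Γf * Df + N * Bf)
    (hCfh : Cfh = Cf * Mᵀ) (hDfh : Dfh = Df) :
    Q * Pi1 = Pi2 ∧
    Pi1ᵀ * Q * Pi1 = Matrix.fromBlocks X 1 1 Y ∧
    Pi1ᵀ * (Q * A) * Pi1 = Matrix.fromBlocks (Ap * X + Bp * Γf * Cfh) Ap Afh (Y * Ap) ∧
    Pi1ᵀ * (Q * B) = vcat (Bp * Γf * Dfh + Bp * Γc) (Bfh + Y * Bp * Γc) ∧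
    Cz * Pi1 = hcat Cfh 0 :=
  change_of_variables_identities_general Y N Ytilde X M Xtilde hX hinv hinv' Ap Bp Γc Γf Af Bf Cf Df
    Q A B Cz hQ hA hB hCz Pi1 Pi2 hPi1 hPi2 Afh Bfh Cfh Dfh hAfh hBfh hCfh hDfh
end

section
/- Let X, Y ∈ ℝ^{p×p} be symmetric matrices such that the block matrix [[X, I_p],[I_p, Y]] is positive definite. Then there exist invertible matrices M, N ∈ ℝ^{p×p} and symmetric matrices Ỹ, X̃ ∈ ℝ^{p×p} such that Q := [[Y, N],[Nᵀ, Ỹ]] is symmetric positive definite and Q⁻¹ = [[X, M],[Mᵀ, X̃]]. -/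
/-!
Since `[[X, I], [I, Y]] ≻ 0`, its corner `Y` and the Schur complement `S = X - Y⁻¹` of `Y` in it
are positive definite. Then `P = [[X, S], [S, S]]` is positive definite as well, its Schur
complement `X - S S⁻¹ S = Y⁻¹` being so, and its inverse is `Q = [[Y, -Y], [-Y, Y + S⁻¹]]`.
Thus `M = S`, `N = -Y` work; they satisfy `M Nᵀ = I - X Y`.
-/

open Matrix

namespace Matrix

variable {m n 𝕜 : Type*} [Fintype m] [Fintype n] [DecidableEq m] [DecidableEq n] [RCLike 𝕜]

open scoped ComplexOrder in
theorem PosDef.posDef_fromBlocks₂₂_iff (A : Matrix m m 𝕜) (B : Matrix m n 𝕜)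
    {D : Matrix n n 𝕜} (hD : D.PosDef) :
    (fromBlocks A B Bᴴ D).PosDef ↔ (A - B * D⁻¹ * Bᴴ).PosDef := by
  have := hD.isUnit.invertible
  have hdet : (fromBlocks A B Bᴴ D).det ≠ 0 ↔ (A - B * D⁻¹ * Bᴴ).det ≠ 0 := by
    rw [det_fromBlocks₂₂, invOf_eq_nonsing_inv, mul_ne_zero_iff, and_iff_right hD.det_pos.ne']
  refine ⟨fun h => ?_, fun h => ?_⟩
  · exact ((hD.fromBlocks₂₂ A B).1 h.posSemidef).posDef_iff_det_ne_zero.2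
      (hdet.1 h.det_pos.ne')
  · exact ((hD.fromBlocks₂₂ A B).2 h.posSemidef).posDef_iff_det_ne_zero.2
      (hdet.2 h.det_pos.ne')

theorem fromBlocks_neg_neg_add_mul_fromBlocks_eq_one {R : Type*} [Ring R] {X Y S T : Matrix n n R}
    (hY : Y * (X - S) = 1) (hT : T * S = 1) :
    fromBlocks Y (-Y) (-Y) (Y + T) * fromBlocks X S S S = 1 := by
  rw [fromBlocks_multiply, ← fromBlocks_one]
  congr 1
  · rw [← hY]; noncomm_ring
  · noncomm_ring
  · rw [add_mul, hT, ← hY]; noncomm_ring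
  · rw [add_mul, hT]; noncomm_ring

end Matrix

theorem lyapunov_matrix_completion_general {p : ℕ}
    (X Y : Matrix (Fin p) (Fin p) ℝ)
    (h : (Matrix.fromBlocks X (1 : Matrix (Fin p) (Fin p) ℝ)
            (1 : Matrix (Fin p) (Fin p) ℝ) Y).PosDef) :
    ∃ (M N Ytilde Xtilde : Matrix (Fin p) (Fin p) ℝ),
      IsUnit M ∧ IsUnit N ∧ Ytilde.IsSymm ∧ Xtilde.IsSymm ∧
      (Matrix.fromBlocks Y N Nᵀ Ytilde).PosDef ∧
      (Matrix.fromBlocks Y N Nᵀ Ytilde)⁻¹ = Matrix.fromBlocks X M Mᵀ Xtilde := by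
  have hYpd : Y.PosDef := h.submatrix Sum.inr_injective
  have hYt : Yᵀ = Y := hYpd.isHermitian.eq
  have hS : (X - Y⁻¹).PosDef := by
    simpa using (hYpd.posDef_fromBlocks₂₂_iff X 1).1 (by simpa using h)
  set S := X - Y⁻¹
  have hSt : Sᵀ = S := hS.isHermitian.eq
  have hP : (fromBlocks X S S S).PosDef := by
    have : X - S * S⁻¹ * S = Y⁻¹ := by
      rw [mul_nonsing_inv _ hS.det_pos.ne'.isUnit, one_mul, sub_sub_cancel]
    simpa [hSt, this, hYpd.inv] using hS.posDef_fromBlocks₂₂_iff X S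
  have hQP : fromBlocks Y (-Y) (-Y)ᵀ (Y + S⁻¹) * fromBlocks X S S S = 1 := by
    rw [transpose_neg, hYt]
    exact fromBlocks_neg_neg_add_mul_fromBlocks_eq_one
      (by rw [sub_sub_cancel, mul_nonsing_inv _ hYpd.det_pos.ne'.isUnit])
      (nonsing_inv_mul _ hS.det_pos.ne'.isUnit)
  refine ⟨S, -Y, Y + S⁻¹, S, hS.isUnit, hYpd.isUnit.neg, (hYpd.add hS.inv).isHermitian.eq, hSt,
    ?_, ?_⟩
  · rw [← inv_eq_left_inv hQP]; exact hP.inv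
  · rw [inv_eq_right_inv hQP, hSt]

/-- Matrix-completion fact: if `[[X, I],[I, Y]] ≻ 0` then a positive definite `Q` with
prescribed (1,1)-blocks of `Q` and `Q⁻¹` can be constructed. -/
theorem lyapunov_matrix_completion {p : ℕ}
    (X Y : Matrix (Fin p) (Fin p) ℝ) (hX : X.IsSymm) (hY : Y.IsSymm)
    (h : (Matrix.fromBlocks X (1 : Matrix (Fin p) (Fin p) ℝ)
            (1 : Matrix (Fin p) (Fin p) ℝ) Y).PosDef) :
    ∃ (M N Ytilde Xtilde : Matrix (Fin p) (Fin p) ℝ),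
      IsUnit M ∧ IsUnit N ∧ Ytilde.IsSymm ∧ Xtilde.IsSymm ∧
      (Matrix.fromBlocks Y N Nᵀ Ytilde).PosDef ∧
      (Matrix.fromBlocks Y N Nᵀ Ytilde)⁻¹ = Matrix.fromBlocks X M Mᵀ Xtilde :=
  lyapunov_matrix_completion_general X Y h
end
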